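/- arXiv:2307.04399 — 11 statements merged into one kernel-verified Lean document; each statement's English description precedes it below -/
import Mathlib

section
/- If Q is a quandle and X ⊆ Q is a subquandle such that Q \ X is also a subquandle, then for every a ∈ Q \ X, the right translation map R_a(x) = x ◁ a restricts to a bijection of X onto X. -/
def IsQuandleOp {Q : Type*} (op : Q → Q → Q) : Prop :=
  (∀ a, op a a = a) ∧
  (∀ b, Function.Bijective (fun a => op a b)) ∧
  (∀ a b c, op (op a b) c = op (op a c) (op b c))

def IsSubquandle {Q : Type*} (op : Q → Q → Q) (X : Set Q) : Prop :=
  (∀ x ∈ X, ∀ y ∈ X, op x y ∈ X) ∧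
  (∀ x ∈ X, ∀ y ∈ X, ∃ c ∈ X, x = op c y)

theorem stmt_0 {Q : Type*} (op : Q → Q → Q) (hQ : IsQuandleOp op)
    (X : Set Q) (hX : IsSubquandle op X) (hXc : IsSubquandle op Xᶜ)
    (a : Q) (ha : a ∈ Xᶜ) :
    Set.BijOn (fun x => op x a) X X := by
  obtain ⟨-, hbij, -⟩ := hQ
  have hinj := (hbij a).1
  refine ⟨?_, fun x _ y _ h => hinj h, ?_⟩
  · intro x hx
    by_contra hmem
    obtain ⟨c, hc, hcx⟩ := hXc.2 _ hmem a ha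
    exact hc (hinj hcx.symm ▸ hx)
  · intro y hy
    obtain ⟨x, hx⟩ := (hbij a).2 y
    refine ⟨x, ?_, hx⟩
    by_contra hxc
    have : op x a ∈ X := by simpa [hx] using hy
    exact hXc.1 x hxc a ha this
end

section
/- In a finite quandle Q, the intersection of two Q-complemented subquandles is a Q-complemented subquandle. -/
lemma pres {Q : Type*} [Finite Q] (op : Q → Q → Q) (hQ : IsQuandleOp op)
    (X : Set Q) (hX : IsSubquandle op X) (hXc : IsSubquandle op Xᶜ)
    (y x : Q) : op x y ∈ X ↔ x ∈ X := by
  have key : ∀ (S : Set Q), (∀ a ∈ S, a ∈ X ↔ y ∈ X) →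
      (∀ a ∈ S, ∀ b ∈ S, op a b ∈ S) → y ∈ S → ∀ z, op z y ∈ S ↔ z ∈ S := by
    intro S _ hcl hyS z
    have hmt : Set.MapsTo (fun a => op a y) S S := fun a ha => hcl a ha y hyS
    have hinj : Set.InjOn (fun a => op a y) S := ((hQ.2.1 y).1).injOn
    have hbij : Set.BijOn (fun a => op a y) S S :=
      ((Set.Finite.injOn_iff_bijOn_of_mapsTo (Set.toFinite S) hmt).mp hinj)
    constructor
    · intro h
      obtain ⟨w, hw, hwe⟩ := hbij.surjOn h
      have : w = z := (hQ.2.1 y).1 hwe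
      exact this ▸ hw
    · exact fun h => hmt h
  by_cases hy : y ∈ X
  · exact key X (by tauto) hX.1 hy x
  · have := key Xᶜ (by tauto) hXc.1 hy x
    simpa using not_iff_not.mp this

theorem stmt_1 {Q : Type*} [Finite Q] (op : Q → Q → Q) (hQ : IsQuandleOp op)
    (X Y : Set Q) (hX : IsSubquandle op X) (hXc : IsSubquandle op Xᶜ)
    (hY : IsSubquandle op Y) (hYc : IsSubquandle op Yᶜ) :
    IsSubquandle op (X ∩ Y) ∧ IsSubquandle op (X ∩ Y)ᶜ := by
  have pX := pres op hQ X hX hXc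
  have pY := pres op hQ Y hY hYc
  have memiff : ∀ y x, op x y ∈ X ∩ Y ↔ x ∈ X ∩ Y := by
    intro y x
    simp only [Set.mem_inter_iff, pX y x, pY y x]
  constructor <;> constructor
  · intro x hx y hy; exact (memiff y x).mpr hx
  · intro x hx y hy
    obtain ⟨c, hc⟩ := (hQ.2.1 y).2 x
    refine ⟨c, (memiff y c).mp ?_, hc.symm⟩; simpa [hc] using hx
  · intro x hx y hy
    exact fun h => hx ((memiff y x).mp h)
  · intro x hx y hy
    obtain ⟨c, hc⟩ := (hQ.2.1 y).2 x
    refine ⟨c, fun h => hx ?_, hc.symm⟩; have := (memiff y c).mpr h; simpa [hc] using this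
end

section
/- In a finite quandle Q, for any a ∈ Q, the complement Q \ Ω_a of the orbit of a is a subquandle; hence Ω_a is Q-complemented. -/
def quandleRel {Q : Type*} (op : Q → Q → Q) (x y : Q) : Prop :=
  ∃ z, x = op y z ∨ y = op x z

def quandleOrbit {Q : Type*} (op : Q → Q → Q) (a : Q) : Set Q :=
  {b | Relation.ReflTransGen (quandleRel op) a b}

theorem stmt_3 {Q : Type*} [Finite Q] (op : Q → Q → Q) (hQ : IsQuandleOp op)
    (a : Q) :
    IsSubquandle op (quandleOrbit op a)ᶜ ∧ IsSubquandle op (quandleOrbit op a) := by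
  obtain ⟨hid, hbij, hdist⟩ := hQ
  constructor
  · constructor
    · intro x hx y hy h
      exact hx (h.tail ⟨y, Or.inl rfl⟩)
    · intro x hx y hy
      obtain ⟨c, hc⟩ := (hbij y).2 x
      refine ⟨c, fun hcmem => hx (hcmem.tail ⟨y, Or.inr hc.symm⟩), hc.symm⟩
  · constructor
    · intro x hx y hy
      exact hx.tail ⟨y, Or.inr rfl⟩
    · intro x hx y hy
      obtain ⟨c, hc⟩ := (hbij y).2 x
      exact ⟨c, hx.tail ⟨y, Or.inl hc.symm⟩, hc.symm⟩
end

section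
/- In a finite quandle Q, for any a ∈ Q, the orbit Ω_a equals the intersection Q_a of all Q-complemented subquandles containing a; i.e., Ω_a is the smallest Q-complemented subquandle containing a. -/
theorem stmt_4 {Q : Type*} [Finite Q] (op : Q → Q → Q) (hQ : IsQuandleOp op)
    (a : Q) :
    quandleOrbit op a =
      ⋂₀ {X : Set Q | IsSubquandle op X ∧ IsSubquandle op Xᶜ ∧ a ∈ X} := by
  obtain ⟨hid, hbij, hdist⟩ := hQ
  -- a complemented subquandle is closed under op with arbitrary second argument
  have mul_mem : ∀ (X : Set Q), IsSubquandle op X → IsSubquandle op Xᶜ →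
      ∀ y ∈ X, ∀ z, op y z ∈ X := by
    intro X hX hXc y hy z
    by_cases hz : z ∈ X
    · exact hX.1 y hy z hz
    · by_contra h
      obtain ⟨c, hc, hcy⟩ := hXc.2 (op y z) h z hz
      have : y = c := (hbij z).1 hcy
      exact hc (this ▸ hy)
  apply Set.Subset.antisymm
  · intro b hb X hX
    obtain ⟨hX1, hX2, haX⟩ := hX
    have hX1' : IsSubquandle op Xᶜᶜ := by rwa [compl_compl]
    induction hb with
    | refl => exact haX
    | tail h1 h2 ih =>
      rename_i c b
      obtain ⟨z, hz | hz⟩ := h2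
      · -- c = op b z
        by_contra hbX
        have : c ∈ Xᶜ := hz ▸ mul_mem Xᶜ hX2 hX1' b hbX z
        exact this ih
      · exact hz ▸ mul_mem X hX1 hX2 c ih z
  · apply Set.sInter_subset_of_mem
    refine ⟨⟨?_, ?_⟩, ⟨?_, ?_⟩, Relation.ReflTransGen.refl⟩
    · intro x hx y _
      exact Relation.ReflTransGen.tail hx ⟨y, Or.inr rfl⟩
    · intro x hx y _
      obtain ⟨c, hc⟩ := (hbij y).2 x
      exact ⟨c, Relation.ReflTransGen.tail hx ⟨y, Or.inl hc.symm⟩, hc.symm⟩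
    · intro x hx y _
      intro h
      exact hx (Relation.ReflTransGen.tail h ⟨y, Or.inl rfl⟩)
    · intro x hx y _
      obtain ⟨c, hc⟩ := (hbij y).2 x
      refine ⟨c, fun hcO => hx (Relation.ReflTransGen.tail hcO ⟨y, Or.inr hc.symm⟩), hc.symm⟩
end

section
/- Let Q be a finite quandle and ≤ a quasi-order on Q such that any two elements in the same orbit are equivalent (x ~ y whenever x and y are in the same orbit of the right-translation group). Then ≤ is Q-compatible: x ≤ x' and y ≤ y' imply x ◁ y ≤ x' ◁ y'. -/
def CompatibleQuasiOrder {Q : Type*} (op : Q → Q → Q) (le : Q → Q → Prop) : Prop :=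
  ∀ x x' y y' : Q, le x x' → le y y' → le (op x y) (op x' y')

theorem stmt_7 {Q : Type*} [Finite Q] (op : Q → Q → Q) (hQ : IsQuandleOp op)
    (le : Q → Q → Prop) (hrefl : Reflexive le) (htrans : Transitive le)
    (horb : ∀ x y : Q, Relation.ReflTransGen (quandleRel op) x y → le x y ∧ le y x) :
    CompatibleQuasiOrder op le := by
  intro x x' y y' hx _
  have h1 : le (op x y) x :=
    (horb (op x y) x (Relation.ReflTransGen.single ⟨y, Or.inl rfl⟩)).1
  have h2 : le x' (op x' y') :=
    (horb x' (op x' y') (Relation.ReflTransGen.single ⟨y', Or.inr rfl⟩)).1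
  exact htrans (htrans h1 hx) h2
end

section
/- Consider the dihedral quandle on {0,1,2} with x ◁ y = 2y − x mod 3. If ≤ is a compatible quasi-order on {0,1,2} and there exist distinct x, y with x ≤ y, then ≤ is the total quasi-order (all elements mutually equivalent). -/
lemma aux_cover : ∀ x y a : ZMod 3, x ≠ y → a = x ∨ a = y ∨ a = 2 * y - x := by decide

theorem stmt_9 (le : ZMod 3 → ZMod 3 → Prop)
    (hrefl : Reflexive le) (htrans : Transitive le)
    (hcomp : CompatibleQuasiOrder (fun x y => 2 * y - x) le)
    (h : ∃ x y : ZMod 3, x ≠ y ∧ le x y) :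
    ∀ x y : ZMod 3, le x y := by
  obtain ⟨x, y, hxy, hle⟩ := h
  have h3 : (3 : ZMod 3) = 0 := rfl
  have hxt : le x (2 * y - x) := by
    have := hcomp x y x x hle (hrefl x)
    have e1 : 2 * x - x = x := by ring
    have e2 : 2 * x - y = 2 * y - x := by linear_combination (x - y) * h3
    simp only [] at this
    rwa [e1, e2] at this
  have hty : le (2 * y - x) y := by
    have := hcomp y y x y (hrefl y) hle
    have e1 : 2 * y - y = y := by ring
    have e2 : 2 * x - y = 2 * y - x := by linear_combination (x - y) * h3
    simp only [] at this
    rwa [e1, e2] at this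
  have hyt : le y (2 * y - x) := by
    have := hcomp (2*y-x) (2*y-x) x (2*y-x) (hrefl _) hxt
    have e1 : 2 * x - (2 * y - x) = y := by linear_combination (x - y) * h3
    have e2 : 2 * (2*y-x) - (2*y-x) = 2*y-x := by ring
    simp only [] at this
    rwa [e1, e2] at this
  have hyx : le y x := by
    have := hcomp y (2*y-x) y y hyt (hrefl y)
    have e1 : 2 * y - y = y := by ring
    have e2 : 2 * y - (2 * y - x) = x := by ring
    simp only [] at this
    rwa [e1, e2] at this
  have htx : le (2 * y - x) x := htrans hty hyx
  intro a b
  rcases aux_cover x y a hxy with ha | ha | ha <;>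
    rcases aux_cover x y b hxy with hb | hb | hb <;> rw [ha, hb] <;>
      first
        | exact hrefl _
        | exact hle
        | exact hyx
        | exact hxt
        | exact hyt
        | exact htx
        | exact hty
end

section
/- The only quasi-orders on Z/3 compatible with the dihedral quandle structure x ◁ y = 2y − x mod 3 are the discrete order (equality) and the total quasi-order. -/
theorem stmt_10 (le : ZMod 3 → ZMod 3 → Prop)
    (hrefl : Reflexive le) (htrans : Transitive le)
    (hcomp : CompatibleQuasiOrder (fun x y => 2 * y - x) le) :
    (∀ x y : ZMod 3, le x y ↔ x = y) ∨ (∀ x y : ZMod 3, le x y) := by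
  by_cases h : ∀ x y : ZMod 3, le x y → x = y
  · left
    intro x y
    constructor
    · exact h x y
    · rintro rfl; exact hrefl x
  · right
    push_neg at h
    obtain ⟨a, b, hab, hne⟩ := h
    -- one application: pairs with difference a - b everywhere
    have H2 : ∀ t : ZMod 3, le (2 * a - t) (2 * b - t) := fun t =>
      hcomp t t a b (hrefl t) hab
    -- two applications: pairs with difference b - a everywhere
    have H1 : ∀ t : ZMod 3, le (a - t) (b - t) := by
      intro t
      have := hcomp t t (2 * a - 0) (2 * b - 0) (hrefl t) (H2 0)
      simp only at this
      have e1 : 2 * (2 * a - 0) - t = a - t := by ring_nf; rw [show (4 : ZMod 3) = 1 by decide]; ring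
      have e2 : 2 * (2 * b - 0) - t = b - t := by ring_nf; rw [show (4 : ZMod 3) = 1 by decide]; ring
      rwa [e1, e2] at this
    intro x y
    have key : ∀ d e : ZMod 3, e ≠ 0 → d = 0 ∨ d = e ∨ d = -e := by decide
    have hba : b - a ≠ 0 := sub_ne_zero.mpr (fun hh => hne hh.symm)
    rcases key (y - x) (b - a) hba with hd | hd | hd
    · have : y = x := by linear_combination hd
      rw [this]; exact hrefl x
    · -- y - x = b - a : use H1 with t = a - x
      have := H1 (a - x)
      have e1 : a - (a - x) = x := by ring
      have e2 : b - (a - x) = y := by linear_combination -hd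
      rwa [e1, e2] at this
    · -- y - x = a - b : use H2 with t = 2*a - x
      have := H2 (2 * a - x)
      have e1 : 2 * a - (2 * a - x) = x := by ring
      have e2 : 2 * b - (2 * a - x) = y := by
        have h3 : (3 : ZMod 3) = 0 := by decide
        linear_combination -hd + (b - a) * h3
      rwa [e1, e2] at this
end

section
/- Consider the quandle on {a,b,c} with matrix rows [a,a,a; c,b,b; b,c,c] (i.e., a ◁ x = a for all x; b ◁ a = c, b ◁ b = b ◁ c = b; c ◁ a = b, c ◁ b = c ◁ c = c). If ≤ is a compatible quasi-order, then either b and c are ≤-equivalent or b and c are incomparable. -/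
def q3op : Fin 3 → Fin 3 → Fin 3 := ![![0,0,0], ![2,1,1], ![1,2,2]]

theorem stmt_11 (le : Fin 3 → Fin 3 → Prop)
    (hrefl : Reflexive le) (htrans : Transitive le)
    (hcomp : CompatibleQuasiOrder q3op le) :
    (le 1 2 ∧ le 2 1) ∨ (¬ le 1 2 ∧ ¬ le 2 1) := by
  by_cases h12 : le 1 2
  · left
    have := hcomp 1 2 0 0 h12 (hrefl 0)
    simpa [q3op] using ⟨h12, this⟩
  · right
    refine ⟨h12, fun h21 => h12 ?_⟩
    have := hcomp 2 1 0 0 h21 (hrefl 0)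
    simpa [q3op] using this
end

section
/- For the quandle on {a,b,c} with a ◁ x = a, b ◁ a = c, c ◁ a = b, and b, c fixed by right translation by b and c: if ≤ is a compatible quasi-order in which b and c are incomparable, then ≤ is the discrete order (equality). -/
theorem stmt_12 (le : Fin 3 → Fin 3 → Prop)
    (hrefl : Reflexive le) (htrans : Transitive le)
    (hcomp : CompatibleQuasiOrder q3op le)
    (hinc : ¬ le 1 2 ∧ ¬ le 2 1) :
    ∀ x y : Fin 3, le x y ↔ x = y := by
  intro x y
  constructor
  · intro h
    fin_cases x <;> fin_cases y <;> simp_all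
    · exact hinc.2 (by simpa [q3op] using hcomp 1 1 0 1 (hrefl 1) h)
    · exact hinc.2 (by simpa [q3op] using hcomp 1 1 0 2 (hrefl 1) h)
    · exact hinc.1 (by simpa [q3op] using hcomp 1 1 1 0 (hrefl 1) h)
    · exact hinc.1 (by simpa [q3op] using hcomp 1 1 2 0 (hrefl 1) h)
  · rintro rfl; exact hrefl x
end

section
/- Consider the tetrahedral quandle on {0,1,2,3} with matrix [a,d,b,c; c,b,d,a; d,a,c,b; b,c,a,d]. The only compatible quasi-orders are equality and the total quasi-order. -/
def q4tet : Fin 4 → Fin 4 → Fin 4 :=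
  ![![0,3,1,2], ![2,1,3,0], ![3,0,2,1], ![1,2,0,3]]

theorem stmt_13 (le : Fin 4 → Fin 4 → Prop)
    (hrefl : Reflexive le) (htrans : Transitive le)
    (hcomp : CompatibleQuasiOrder q4tet le) :
    (∀ x y : Fin 4, le x y ↔ x = y) ∨ (∀ x y : Fin 4, le x y) := by
  have st : ∀ a b z : Fin 4, le a b → le (q4tet a z) (q4tet b z) :=
    fun a b z h => hcomp a b z z h (hrefl z)
  by_cases h : ∀ x y : Fin 4, le x y → x = y
  · exact Or.inl fun x y => ⟨h x y, fun e => e ▸ hrefl x⟩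
  · right
    push_neg at h
    obtain ⟨a, b, hab, hne⟩ := h
    have all01 : le 0 1 → ∀ u v : Fin 4, le u v := by
      intro h01 u v
      have h02 : le 0 2 := st 0 1 0 h01
      have h31 : le 3 1 := st 0 1 1 h01
      have h13 : le 1 3 := st 0 1 2 h01
      have h20 : le 2 0 := st 0 1 3 h01
      have h03 : le 0 3 := st 0 2 0 h02
      have h30 : le 3 0 := st 0 2 1 h02
      have h12 : le 1 2 := st 0 2 2 h02
      have h21 : le 2 1 := st 0 2 3 h02
      have h32 : le 3 2 := st 0 3 1 h03
      have h10 : le 1 0 := st 0 3 2 h03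
      have h23 : le 2 3 := st 0 3 3 h03
      fin_cases u <;> fin_cases v <;>
        first | exact hrefl _ | exact h01 | exact h02 | exact h31 | exact h13 | exact h20 | exact h03 | exact h30 | exact h12 | exact h21 | exact h32 | exact h10 | exact h23
    apply all01
    fin_cases a <;> fin_cases b <;> simp only [] at hab hne ⊢
    · exact absurd rfl hne
    · exact hab
    · exact st 0 3 0 (st 0 2 0 (hab))
    · exact st 0 3 0 (hab)
    · exact st 3 0 2 (st 2 0 0 (st 1 0 0 (hab)))
    · exact absurd rfl hne
    · exact st 1 2 3 (hab)
    · exact st 2 1 1 (st 1 3 0 (hab))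
    · exact st 3 0 2 (st 2 0 0 (hab))
    · exact st 2 1 1 (hab)
    · exact absurd rfl hne
    · exact st 1 2 3 (st 3 1 0 (st 2 3 0 (hab)))
    · exact st 3 0 2 (hab)
    · exact st 1 2 3 (st 3 1 0 (hab))
    · exact st 2 1 1 (st 1 3 0 (st 3 2 0 (hab)))
    · exact absurd rfl hne
end

section
/- The operation on {a,b,c,d,e,f} given by the matrix [a,a,a,a,a,a; b,b,b,b,b,b; d,e,c,c,c,c; c,f,d,d,d,d; f,c,e,e,e,e; e,d,f,f,f,f] defines a quandle, and the quasi-order making c ~ d and e ~ f equivalent pairs (with a, b, and the classes {c,d}, {e,f} pairwise incomparable) is compatible with it, even though the restriction of this quasi-order to the orbit {c,d,e,f} is neither discrete nor total. -/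
def q6op : Fin 6 → Fin 6 → Fin 6 :=
  ![![0,0,0,0,0,0], ![1,1,1,1,1,1], ![3,4,2,2,2,2],
    ![2,5,3,3,3,3], ![5,2,4,4,4,4], ![4,3,5,5,5,5]]

def q6le (x y : Fin 6) : Prop :=
  x = y ∨ (x = 2 ∧ y = 3) ∨ (x = 3 ∧ y = 2) ∨ (x = 4 ∧ y = 5) ∨ (x = 5 ∧ y = 4)

lemma step23 : quandleRel q6op 2 3 := ⟨0, Or.inr (by decide)⟩
lemma step24 : quandleRel q6op 2 4 := ⟨1, Or.inr (by decide)⟩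
lemma step35 : quandleRel q6op 3 5 := ⟨1, Or.inr (by decide)⟩

lemma closed' : ∀ x y z : Fin 6, (x = 2 ∨ x = 3 ∨ x = 4 ∨ x = 5) →
    (x = q6op y z ∨ y = q6op x z) → (y = 2 ∨ y = 3 ∨ y = 4 ∨ y = 5) := by decide

lemma part1 : IsQuandleOp q6op := by
  refine ⟨by decide, ?_, by decide⟩
  intro b
  rw [Fintype.bijective_iff_injective_and_card]
  exact ⟨by fin_cases b <;> decide, rfl⟩

lemma part2 : CompatibleQuasiOrder q6op q6le := by
  intro x x' y y'
  unfold q6le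
  revert x x' y y'
  decide

theorem stmt_19 :
    IsQuandleOp q6op ∧
    CompatibleQuasiOrder q6op q6le ∧
    {x : Fin 6 | Relation.ReflTransGen (quandleRel q6op) 2 x}
      = ({2,3,4,5} : Set (Fin 6)) ∧
    ¬ (∀ x ∈ ({2,3,4,5} : Set (Fin 6)), ∀ y ∈ ({2,3,4,5} : Set (Fin 6)),
        q6le x y ↔ x = y) ∧
    ¬ (∀ x ∈ ({2,3,4,5} : Set (Fin 6)), ∀ y ∈ ({2,3,4,5} : Set (Fin 6)), q6le x y) := by
  refine ⟨part1, part2, ?_, ?_, ?_⟩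
  · ext x
    simp only [Set.mem_setOf_eq, Set.mem_insert_iff, Set.mem_singleton_iff]
    constructor
    · intro h
      induction h with
      | refl => left; rfl
      | tail _ hr ih =>
        obtain ⟨z, hz⟩ := hr
        exact closed' _ _ z ih hz
    · intro hx
      have h3 : Relation.ReflTransGen (quandleRel q6op) 2 3 :=
        Relation.ReflTransGen.single step23
      rcases hx with rfl | rfl | rfl | rfl
      · exact Relation.ReflTransGen.refl
      · exact h3
      · exact Relation.ReflTransGen.single step24
      · exact h3.tail step35
  · intro h
    have := (h 2 (by simp) 3 (by simp)).mp (Or.inr (Or.inl ⟨rfl, rfl⟩))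
    exact absurd this (by decide)
  · intro h
    have := h 2 (by simp) 4 (by simp)
    revert this
    unfold q6le
    decide
end
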